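/- Let 𝔛 be a Banach space regarded as a topological vector space with its weak topology, 𝔜 a Hausdorff topological vector space over ℂ, and Φ : 𝔛 → 𝔜 a continuous injective linear map with dense range. Let S_1, S_2 be bounded linear operators on 𝔛 and T_1, T_2 continuous linear operators on 𝔜 with T_i ∘ Φ = Φ ∘ S_i (i = 1, 2). Assume ‖S_2 x‖ ≤ ‖S_1 x‖ for all x ∈ 𝔛 and that the triple (Φ, S_1, T_1) admits an approximate inverse intertwining. Then for every y ∈ 𝔜 such that T_1 y = Φ x_1 for some x_1 ∈ 𝔛, there exists x_2 ∈ 𝔛 with T_2 y = Φ x_2 and ‖x_2‖ ≤ ‖x_1‖. -/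

import Mathlib

/-!
Since `F α (T₁ y) → x₁` and `F α (T₁ y) - S₁ (F α y) → 0`, the net `S₁ (F α y)` converges to
`x₁`. The bound `‖S₂ a - S₂ b‖ ≤ ‖S₁ a - S₁ b‖` makes `S₂ (F α y)` Cauchy, so it has a limit `x₂`
with `‖x₂‖ ≤ ‖x₁‖`; and `Φ (S₂ (F α y)) = T₂ (Φ (F α y)) → T₂ y` forces `T₂ y = Φ x₂`.
-/

open Filter Topology

/-- An approximate inverse intertwining for `(Φ, S, T)` where the Banach space `𝔛` carries
its weak topology: `F α (Φ x) → x` weakly in `𝔛`, `Φ (F α y) → y` in `𝔜`, and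
`F α (T y) - S (F α y) → 0` weakly in `𝔛`, along the filter `l`. -/
def IsWeakAII {𝔛 : Type*} [NormedAddCommGroup 𝔛] [NormedSpace ℂ 𝔛]
    {𝔜 : Type*} [AddCommGroup 𝔜] [Module ℂ 𝔜] [TopologicalSpace 𝔜]
    {ι : Type*} (l : Filter ι)
    (Φ : 𝔛 →ₗ[ℂ] 𝔜) (S : 𝔛 →L[ℂ] 𝔛) (T : 𝔜 →L[ℂ] 𝔜)
    (F : ι → (𝔜 →ₗ[ℂ] 𝔛)) : Prop :=
  (∀ x : 𝔛, Tendsto (fun α => (F α (Φ x) : WeakSpace ℂ 𝔛)) l (nhds (x : WeakSpace ℂ 𝔛))) ∧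
  (∀ y : 𝔜, Tendsto (fun α => Φ (F α y)) l (nhds y)) ∧
  (∀ y : 𝔜, Tendsto (fun α => (F α (T y) - S (F α y) : WeakSpace ℂ 𝔛)) l
    (nhds (0 : WeakSpace ℂ 𝔛)))

theorem Cauchy.map_of_dist_le {ι α β : Type*} [PseudoMetricSpace α] [PseudoMetricSpace β]
    {l : Filter ι} {f : ι → α} {g : ι → β} (hf : Cauchy (l.map f))
    (hfg : ∀ a b, dist (g a) (g b) ≤ dist (f a) (f b)) : Cauchy (l.map g) := by
  rw [cauchy_map_iff, tendsto_uniformity_iff_dist_tendsto_zero] at hf ⊢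
  exact ⟨hf.1, squeeze_zero (fun _ => dist_nonneg) (fun p => hfg p.1 p.2) hf.2⟩

theorem exists_tendsto_norm_le_of_norm_apply_le {ι E F G 𝓕 𝓖 : Type*} [AddGroup E]
    [SeminormedAddCommGroup F] [SeminormedAddCommGroup G] [CompleteSpace G]
    [FunLike 𝓕 E F] [AddMonoidHomClass 𝓕 E F] [FunLike 𝓖 E G] [AddMonoidHomClass 𝓖 E G]
    {S₁ : 𝓕} {S₂ : 𝓖} (hS : ∀ x, ‖S₂ x‖ ≤ ‖S₁ x‖) {l : Filter ι} [l.NeBot] {u : ι → E}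
    {x₁ : F} (hu : Tendsto (fun α => S₁ (u α)) l (𝓝 x₁)) :
    ∃ x₂, Tendsto (fun α => S₂ (u α)) l (𝓝 x₂) ∧ ‖x₂‖ ≤ ‖x₁‖ := by
  have hdist : ∀ a b, dist (S₂ (u a)) (S₂ (u b)) ≤ dist (S₁ (u a)) (S₁ (u b)) := fun a b => by
    simpa only [dist_eq_norm_sub, map_sub] using hS (u a - u b)
  have hcauchy : Cauchy (l.map fun α => S₂ (u α)) := hu.cauchy_map.map_of_dist_le hdist
  obtain ⟨x₂, hx₂⟩ := cauchy_map_iff_exists_tendsto.mp hcauchy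
  exact ⟨x₂, hx₂, le_of_tendsto_of_tendsto' hx₂.norm hu.norm fun α => hS (u α)⟩

-- The ascriptions `: WeakSpace ℂ 𝔛` in `IsWeakAII` are elaborated away, so its limits are
-- taken in the norm topology.
theorem IsWeakAII.tendsto_apply_of_apply_eq {𝔛 𝔜 ι : Type*} [NormedAddCommGroup 𝔛]
    [NormedSpace ℂ 𝔛] [AddCommGroup 𝔜] [Module ℂ 𝔜] [TopologicalSpace 𝔜] {l : Filter ι}
    {Φ : 𝔛 →ₗ[ℂ] 𝔜} {S : 𝔛 →L[ℂ] 𝔛} {T : 𝔜 →L[ℂ] 𝔜} {F : ι → (𝔜 →ₗ[ℂ] 𝔛)}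
    (hF : IsWeakAII l Φ S T F) {y : 𝔜} {x : 𝔛} (hy : T y = Φ x) :
    Tendsto (fun α => S (F α y)) l (𝓝 x) := by
  have hdefect : Tendsto (fun α => F α (T y) - S (F α y)) l (𝓝 0) := hF.2.2 y
  simpa only [← hy, sub_sub_cancel, sub_zero] using (hF.1 x).sub hdefect

theorem exists_preimage_of_AII_norm_le_general
    {𝔛 : Type*} [NormedAddCommGroup 𝔛] [NormedSpace ℂ 𝔛] [CompleteSpace 𝔛]
    {𝔜 : Type*} [AddCommGroup 𝔜] [Module ℂ 𝔜] [TopologicalSpace 𝔜]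
    [T2Space 𝔜]
    (Φ : 𝔛 →ₗ[ℂ] 𝔜) (hΦc : Continuous fun x : WeakSpace ℂ 𝔛 => Φ x)
    (S₁ S₂ : 𝔛 →L[ℂ] 𝔛) (T₁ T₂ : 𝔜 →L[ℂ] 𝔜)
    (h₂ : ∀ x, T₂ (Φ x) = Φ (S₂ x))
    (hnorm : ∀ x : 𝔛, ‖S₂ x‖ ≤ ‖S₁ x‖)
    {ι : Type*} (l : Filter ι) [l.NeBot] (F : ι → (𝔜 →ₗ[ℂ] 𝔛))
    (hF : IsWeakAII l Φ S₁ T₁ F)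
    (y : 𝔜) (x₁ : 𝔛) (hx₁ : T₁ y = Φ x₁) :
    ∃ x₂ : 𝔛, T₂ y = Φ x₂ ∧ ‖x₂‖ ≤ ‖x₁‖ := by
  obtain ⟨x₂, hx₂, hle⟩ :=
    exists_tendsto_norm_le_of_norm_apply_le hnorm (hF.tendsto_apply_of_apply_eq hx₁)
  have hΦ : Continuous Φ := hΦc.comp (toWeakSpaceCLM ℂ 𝔛).continuous
  have hT₂y : Tendsto (fun α => Φ (S₂ (F α y))) l (𝓝 (T₂ y)) := by
    simpa only [Function.comp_def, h₂] using (T₂.continuous.tendsto y).comp (hF.2.1 y)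
  exact ⟨x₂, tendsto_nhds_unique hT₂y ((hΦ.tendsto x₂).comp hx₂), hle⟩

/-- Let `Φ` intertwine the pairs `(Sᵢ, Tᵢ)`, `i = 1, 2`, where the Banach space `𝔛` is
regarded with its weak topology, and suppose `‖S₂ x‖ ≤ ‖S₁ x‖` for all `x`. If
`(Φ, S₁, T₁)` has an approximate inverse intertwining, then `T₁⁻¹(Im Φ) ⊆ T₂⁻¹(Im Φ)` and
`‖Φ⁻¹ (T₂ y)‖ ≤ ‖Φ⁻¹ (T₁ y)‖` for every `y ∈ T₁⁻¹(Im Φ)`. -/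
theorem exists_preimage_of_AII_norm_le
    {𝔛 : Type*} [NormedAddCommGroup 𝔛] [NormedSpace ℂ 𝔛] [CompleteSpace 𝔛]
    {𝔜 : Type*} [AddCommGroup 𝔜] [Module ℂ 𝔜] [TopologicalSpace 𝔜]
    [IsTopologicalAddGroup 𝔜] [ContinuousSMul ℂ 𝔜] [T2Space 𝔜]
    (Φ : 𝔛 →ₗ[ℂ] 𝔜) (hΦc : Continuous fun x : WeakSpace ℂ 𝔛 => Φ x)
    (hΦinj : Function.Injective Φ) (hΦdr : DenseRange Φ)
    (S₁ S₂ : 𝔛 →L[ℂ] 𝔛) (T₁ T₂ : 𝔜 →L[ℂ] 𝔜)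
    (h₁ : ∀ x, T₁ (Φ x) = Φ (S₁ x)) (h₂ : ∀ x, T₂ (Φ x) = Φ (S₂ x))
    (hnorm : ∀ x : 𝔛, ‖S₂ x‖ ≤ ‖S₁ x‖)
    {ι : Type*} (l : Filter ι) [l.NeBot] (F : ι → (𝔜 →ₗ[ℂ] 𝔛))
    (hF : IsWeakAII l Φ S₁ T₁ F)
    (y : 𝔜) (x₁ : 𝔛) (hx₁ : T₁ y = Φ x₁) :
    ∃ x₂ : 𝔛, T₂ y = Φ x₂ ∧ ‖x₂‖ ≤ ‖x₁‖ :=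
  exists_preimage_of_AII_norm_le_general Φ hΦc S₁ S₂ T₁ T₂ h₂ hnorm l F hF y x₁ hx₁
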